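/- In the surjection operad over Z/2, the element U representing (x,y,z) ↦ (x⌣y)⌣₁z + x⌣₁(y⌣z) + (z⌣x)⌣₁y equals (1,3,1,2) + (1,2,3,2) + (1,2,3,1) + (3,2,3,1) + (3,1,2,1). -/

import Mathlib

/- The surjection operad over Z/2 (Berger–Fresse).  Elements of X(r)_d are Z/2-linear
combinations of non-degenerate surjections u : {1,…,r+d} → {1,…,r}, encoded as lists;
degenerate (two equal adjacent entries) or non-surjective lists represent 0. -/

noncomputable section

/-- Formal Z/2-linear combinations of sequences. -/
abbrev El := List ℕ →₀ ZMod 2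

/-- Non-degenerate: no two equal adjacent entries. -/
def Nondeg (u : List ℕ) : Prop := List.Chain' (· ≠ ·) u

instance : DecidablePred Nondeg := fun u => by unfold Nondeg; exact (inferInstance : Decidable (List.IsChain (· ≠ ·) u))

/-- `u` is a surjection onto {1,…,r}. -/
def IsSurj (r : ℕ) (u : List ℕ) : Prop :=
  (∀ k < r, (k + 1) ∈ u) ∧ ∀ x ∈ u, 0 < x ∧ x ≤ r

instance (r : ℕ) : DecidablePred (IsSurj r) := fun u => by unfold IsSurj; infer_instance

/-- The basis element of X(r) given by `u`, or 0 if degenerate/non-surjective. -/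
def gen (r : ℕ) (u : List ℕ) : El :=
  if Nondeg u ∧ IsSurj r u then Finsupp.single u 1 else 0

/-- The differential: delete one entry at a time (signs trivial mod 2). -/
def diffOf (r : ℕ) (u : List ℕ) : El :=
  ∑ i ∈ Finset.range u.length, gen r (u.eraseIdx i)

/-- The differential on X(r), extended linearly. -/
def D (r : ℕ) (x : El) : El := x.sum fun u c => c • diffOf r u

/-- All order-preserving splittings of `v` into `n` overlapping consecutive blocks. -/
def splits : ℕ → List ℕ → List (List (List ℕ))
  | 0, _ => []
  | 1, v => [[v]]
  | n + 2, v =>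
      (List.range v.length).flatMap fun i =>
        (splits (n + 1) (v.drop i)).map fun rest => (v.take (i + 1)) :: rest

/-- Substitute the successive occurrences of `k` in a list by the successive blocks. -/
def substAux (k : ℕ) : List ℕ → List (List ℕ) → List ℕ
  | [], _ => []
  | x :: xs, bs =>
      if x = k then bs.headD [] ++ substAux k xs bs.tail else x :: substAux k xs bs

/-- Operadic composition `u ∘ₖ v` in the surjection operad, for `u ∈ X(r)`, `v ∈ X(s)`:
entries of `u` greater than `k` are increased by `s − 1`, entries of `v` by `k − 1`,
and the occurrences of `k` in `u` are replaced by the blocks of all splittings of `v`. -/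
def comp (r s k : ℕ) (u v : List ℕ) : El :=
  let u' := u.map fun x => if k < x then x + s - 1 else x
  let v' := v.map (· + (k - 1))
  ((splits (u.count k) v').map fun bs => gen (r + s - 1) (substAux k u' bs)).sum

end

/- STATEMENT 8: The element U of X(3) representing
(x,y,z) ↦ (x⌣y)⌣₁z + x⌣₁(y⌣z) + (z⌣x)⌣₁y equals
(1,3,1,2) + (1,2,3,2) + (1,2,3,1) + (3,2,3,1) + (3,1,2,1).
Here (x⌣y)⌣₁z = (1,2,1)∘₁(1,2), x⌣₁(y⌣z) = (1,2,1)∘₂(1,2), and (z⌣x)⌣₁y is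
obtained from (x⌣y)⌣₁z by the S₃-action relabelling values 1↦3, 2↦1, 3↦2. -/

/-- The relabelling 1↦3, 2↦1, 3↦2 of values. -/
def sigma : ℕ → ℕ := fun x => if x = 1 then 3 else if x = 2 then 1 else if x = 3 then 2 else x

/-- The induced action on X(3). -/
noncomputable def permAct (x : El) : El := Finsupp.mapDomain (List.map sigma) x

open Finsupp

theorem gen_eq_single {r : ℕ} {u : List ℕ} (hu : Nondeg u) (hs : IsSurj r u) :
    gen r u = single u 1 :=
  if_pos ⟨hu, hs⟩

theorem permAct_single (u : List ℕ) (c : ZMod 2) :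
    permAct (single u c) = single (u.map sigma) c :=
  mapDomain_single

theorem permAct_add (x y : El) : permAct (x + y) = permAct x + permAct y :=
  mapDomain_add

/- `comp` evaluates by unfolding: `(1,2)` splits as `(1),(1,2)` or `(1,2),(2)`, and these blocks
replace the two `1`s of `(1,3,1)`. -/
theorem comp_one_cupOne_cup :
    comp 2 2 1 [1, 2, 1] [1, 2] = single [1, 3, 1, 2] 1 + single [1, 2, 3, 2] 1 := by
  show gen 3 [1, 3, 1, 2] + (gen 3 [1, 2, 3, 2] + 0) = _
  rw [gen_eq_single (by decide) (by decide), gen_eq_single (by decide) (by decide), add_zero]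

theorem comp_two_cupOne_cup : comp 2 2 2 [1, 2, 1] [1, 2] = single [1, 2, 3, 1] 1 := by
  show gen 3 [1, 2, 3, 1] + 0 = _
  rw [gen_eq_single (by decide) (by decide), add_zero]

theorem permAct_comp_one_cupOne_cup :
    permAct (comp 2 2 1 [1, 2, 1] [1, 2]) = single [3, 2, 3, 1] 1 + single [3, 1, 2, 1] 1 := by
  rw [comp_one_cupOne_cup, permAct_add, permAct_single, permAct_single]
  rfl

theorem U_representation :
    comp 2 2 1 [1, 2, 1] [1, 2] + comp 2 2 2 [1, 2, 1] [1, 2] +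
        permAct (comp 2 2 1 [1, 2, 1] [1, 2]) =
      Finsupp.single [1, 3, 1, 2] 1 + Finsupp.single [1, 2, 3, 2] 1 +
        Finsupp.single [1, 2, 3, 1] 1 + Finsupp.single [3, 2, 3, 1] 1 +
        Finsupp.single [3, 1, 2, 1] 1 := by
  rw [permAct_comp_one_cupOne_cup, comp_one_cupOne_cup, comp_two_cupOne_cup]
  abel
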